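/- Let U ⊆ ℝ⁴ be open, θ : U → M₄(ℝ) smooth with θ(p) antisymmetric and invertible for all p, and x^a : U → ℝ (a = 1,…,D) smooth with positive definite induced metric g. Define h^{ab} := ∑_c {x^a, x^c}{x^b, x^c} and G := e^{−σ} θ g θᵀ. Then for all smooth φ, ψ : U → ℝ, pointwise on U: ∑_{a,b} h^{ab} {x^a, φ}{x^b, ψ} = e^{2σ} ∑_{μ,ν} (G g G)^{μν} ∂_μ φ ∂_ν ψ, where G g G is the matrix product. (Semiclassical form of H^{ab}[X_a,Φ][X_b,Ψ] ∼ e^{2σ}(GgG)^{μν} ∂_μφ ∂_νψ.) -/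

import Mathlib

open Matrix

/-- Partial derivative of `f : ℝ⁴ → ℝ` in the `α`-th coordinate direction at `p`. -/
noncomputable def pderiv4 (f : (Fin 4 → ℝ) → ℝ) (α : Fin 4) (p : Fin 4 → ℝ) : ℝ :=
  fderiv ℝ f p (Pi.single α 1)

/-- Poisson bracket `{f,h} = θ^{μν} ∂_μ f ∂_ν h` of a Poisson tensor field `θ` on `ℝ⁴`. -/
noncomputable def poissonBr (θ : (Fin 4 → ℝ) → Matrix (Fin 4) (Fin 4) ℝ)
    (f h : (Fin 4 → ℝ) → ℝ) (p : Fin 4 → ℝ) : ℝ :=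
  ∑ μ, ∑ ν, θ p μ ν * pderiv4 f μ p * pderiv4 h ν p

/-- Determinant of a 4×4 real antisymmetric matrix is a perfect square (Pfaffian²). -/
lemma skew_det_sq (A : Matrix (Fin 4) (Fin 4) ℝ) (hA : Aᵀ = -A) :
    A.det = (A 0 1 * A 2 3 - A 0 2 * A 1 3 + A 0 3 * A 1 2) ^ 2 := by
  have h : ∀ i j, A j i = -A i j := fun i j => by
    have := congrFun (congrFun hA i) j
    simpa [Matrix.transpose_apply] using this
  have hd : ∀ i, A i i = 0 := fun i => by
    have := h i i; linarith
  have hrep : A = !![0, A 0 1, A 0 2, A 0 3;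
                     -(A 0 1), 0, A 1 2, A 1 3;
                     -(A 0 2), -(A 1 2), 0, A 2 3;
                     -(A 0 3), -(A 1 3), -(A 2 3), 0] := by
    ext i j
    fin_cases i <;> fin_cases j <;>
      simp [h 0 1, h 0 2, h 0 3, h 1 2, h 1 3, h 2 3, hd 0, hd 1, hd 2, hd 3]
  rw [hrep]
  simp [Matrix.det_succ_row_zero, Fin.sum_univ_succ,
    show ((1:Fin 4).succAbove 2) = 3 by decide,
    show ((2:Fin 4).succAbove 2) = 3 by decide,
    show ((3:Fin 4).succAbove 2) = 2 by decide,
    show (Fin.castSucc 2 : Fin 4) = 2 by decide]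
  ring

/-- Contraction of a family of gradients against the induced metric. -/
lemma contract_metric {D : ℕ} (gm : Matrix (Fin 4) (Fin 4) ℝ) (u v : Fin 4 → ℝ)
    (J : Fin D → Fin 4 → ℝ) (hg : gm = Matrix.of fun μ ν => ∑ a, J a μ * J a ν) :
    ∑ a, (J a ⬝ᵥ u) * (J a ⬝ᵥ v) = u ⬝ᵥ gm *ᵥ v := by
  subst hg
  simp only [dotProduct, mulVec, of_apply, Finset.sum_mul, Finset.mul_sum]
  conv_lhs => rw [Finset.sum_comm]
  conv_rhs => rw [Finset.sum_comm]
  refine Finset.sum_congr rfl fun μ _ => ?_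
  conv_lhs => rw [Finset.sum_comm]
  refine Finset.sum_congr rfl fun ν _ => ?_
  refine Finset.sum_congr rfl fun a _ => ?_
  ring

lemma dot_shift (T M : Matrix (Fin 4) (Fin 4) ℝ) (w z : Fin 4 → ℝ) :
    (T *ᵥ w) ⬝ᵥ (M *ᵥ z) = w ⬝ᵥ ((Tᵀ * M) *ᵥ z) := by
  simp only [dotProduct, mulVec, Matrix.mul_apply, transpose_apply, Fin.sum_univ_four]
  ring

lemma quad_form_eq (N : Matrix (Fin 4) (Fin 4) ℝ) (u v : Fin 4 → ℝ) :
    ∑ μ, ∑ ν, N μ ν * u μ * v ν = u ⬝ᵥ N *ᵥ v := by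
  simp only [dotProduct, mulVec, Fin.sum_univ_four]
  ring

lemma sum_rearrange {D : ℕ} (P : Fin D → Fin D → ℝ) (Q R : Fin D → ℝ) :
    ∑ a, ∑ b, (∑ c, P a c * P b c) * Q a * R b
      = ∑ c, (∑ a, P a c * Q a) * (∑ b, P b c * R b) := by
  simp only [Finset.sum_mul, Finset.mul_sum]
  refine Eq.trans (Finset.sum_congr rfl fun a _ => Finset.sum_comm) ?_
  refine Eq.trans Finset.sum_comm ?_
  refine Finset.sum_congr rfl fun c _ => ?_
  refine Eq.trans Finset.sum_comm ?_
  refine Finset.sum_congr rfl fun a _ => ?_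
  refine Finset.sum_congr rfl fun b _ => ?_
  ring

/-- Semiclassical form of `H^{ab}[X_a,Φ][X_b,Ψ] ∼ e^{2σ}(GgG)^{μν} ∂_μφ ∂_νψ`,
with `h^{ab} = {x^a,x^c}{x^b,x^c}`, `e^σ = √(det θ · det g)` and `G = e^{-σ} θ g θᵀ`. -/
theorem semiclassical_H_contraction_GgG
    (U : Set (Fin 4 → ℝ)) (hU : IsOpen U)
    (θ : (Fin 4 → ℝ) → Matrix (Fin 4) (Fin 4) ℝ)
    (hθsmooth : ∀ μ ν, ContDiffOn ℝ (⊤ : ℕ∞) (fun p => θ p μ ν) U)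
    (hθanti : ∀ p ∈ U, (θ p)ᵀ = -θ p)
    (hθinv : ∀ p ∈ U, IsUnit (θ p))
    (D : ℕ) (hD : 4 ≤ D)
    (x : Fin D → (Fin 4 → ℝ) → ℝ)
    (hxsmooth : ∀ a, ContDiffOn ℝ (⊤ : ℕ∞) (x a) U)
    (g : (Fin 4 → ℝ) → Matrix (Fin 4) (Fin 4) ℝ)
    (hgdef : ∀ p, g p = Matrix.of fun μ ν => ∑ a, pderiv4 (x a) μ p * pderiv4 (x a) ν p)
    (hgpd : ∀ p ∈ U, (g p).PosDef)
    (G : (Fin 4 → ℝ) → Matrix (Fin 4) (Fin 4) ℝ)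
    (hGdef : ∀ p, G p = (Real.sqrt ((θ p).det * (g p).det))⁻¹ • (θ p * g p * (θ p)ᵀ))
    (hmat : Fin D → Fin D → (Fin 4 → ℝ) → ℝ)
    (hhmat : ∀ a b p, hmat a b p = ∑ c, poissonBr θ (x a) (x c) p * poissonBr θ (x b) (x c) p) :
    ∀ φ ψ : (Fin 4 → ℝ) → ℝ, ContDiffOn ℝ (⊤ : ℕ∞) φ U → ContDiffOn ℝ (⊤ : ℕ∞) ψ U →
    ∀ p ∈ U,
      ∑ a, ∑ b, hmat a b p * poissonBr θ (x a) φ p * poissonBr θ (x b) ψ p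
        = (Real.sqrt ((θ p).det * (g p).det)) ^ 2 *
            ∑ μ, ∑ ν, (G p * g p * G p) μ ν * pderiv4 φ μ p * pderiv4 ψ ν p := by
  intro φ ψ _ _ p hp
  set T := θ p with hT
  set gm := g p with hgm
  set s := Real.sqrt (T.det * gm.det) with hs
  set J : Fin D → Fin 4 → ℝ := fun a μ => pderiv4 (x a) μ p with hJ
  set Φ : Fin 4 → ℝ := fun μ => pderiv4 φ μ p with hΦ
  set Ψ : Fin 4 → ℝ := fun μ => pderiv4 ψ μ p with hΨ
  have hskew : Tᵀ = -T := hθanti p hp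
  have hgJ : gm = Matrix.of fun μ ν => ∑ a, J a μ * J a ν := hgdef p
  -- Poisson brackets as bilinear forms
  have hBr : ∀ f h : (Fin 4 → ℝ) → ℝ,
      poissonBr θ f h p
        = (fun μ => pderiv4 f μ p) ⬝ᵥ (T *ᵥ fun ν => pderiv4 h ν p) := by
    intro f h
    rw [poissonBr, ← quad_form_eq]
  -- positivity of s
  have hdetT : (0:ℝ) < T.det := by
    have hne : T.det ≠ 0 := by
      have := (Matrix.isUnit_iff_isUnit_det T).mp (hθinv p hp)
      exact this.ne_zero
    have hsq := skew_det_sq T hskew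
    have : 0 ≤ T.det := hsq ▸ sq_nonneg _
    exact lt_of_le_of_ne this (Ne.symm hne)
  have hspos : 0 < s := Real.sqrt_pos.mpr (mul_pos hdetT (hgpd p hp).det_pos)
  have hsne : s ≠ 0 := ne_of_gt hspos
  -- symmetric metric
  have hgsym : gmᵀ = gm := by
    rw [hgJ]; ext μ ν
    simp only [transpose_apply, of_apply]
    exact Finset.sum_congr rfl fun a _ => mul_comm _ _
  -- the two cube matrices coincide
  have hAM : Tᵀ * gm * T = T * gm * Tᵀ := by
    rw [hskew]
    simp [Matrix.neg_mul, Matrix.mul_neg]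
  set A : Matrix (Fin 4) (Fin 4) ℝ := Tᵀ * gm * T with hA
  have hAT : Aᵀ = A := by
    rw [hA, Matrix.transpose_mul, Matrix.transpose_mul, transpose_transpose, hgsym,
      Matrix.mul_assoc]
  -- LHS computation
  have hL : ∑ a, ∑ b, hmat a b p * poissonBr θ (x a) φ p * poissonBr θ (x b) ψ p
      = Φ ⬝ᵥ ((Aᵀ * gm * A) *ᵥ Ψ) := by
    have e1 : ∀ a b : Fin D, poissonBr θ (x a) (x b) p = J a ⬝ᵥ (T *ᵥ J b) := fun a b => hBr _ _
    have e2 : ∀ a : Fin D, poissonBr θ (x a) φ p = J a ⬝ᵥ (T *ᵥ Φ) := fun a => hBr _ _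
    have e3 : ∀ a : Fin D, poissonBr θ (x a) ψ p = J a ⬝ᵥ (T *ᵥ Ψ) := fun a => hBr _ _
    have key : ∀ (c : Fin D) (w : Fin 4 → ℝ),
        ∑ a, (J a ⬝ᵥ (T *ᵥ J c)) * (J a ⬝ᵥ (T *ᵥ w)) = J c ⬝ᵥ (A *ᵥ w) := by
      intro c w
      rw [contract_metric gm _ _ J hgJ, dot_shift, Matrix.mulVec_mulVec, hA]
    calc ∑ a, ∑ b, hmat a b p * poissonBr θ (x a) φ p * poissonBr θ (x b) ψ p
        = ∑ a, ∑ b, (∑ c, (J a ⬝ᵥ (T *ᵥ J c)) * (J b ⬝ᵥ (T *ᵥ J c)))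
            * (J a ⬝ᵥ (T *ᵥ Φ)) * (J b ⬝ᵥ (T *ᵥ Ψ)) := by
          refine Finset.sum_congr rfl fun a _ => Finset.sum_congr rfl fun b _ => ?_
          rw [hhmat, e2, e3]
          congr 1; congr 1
          exact Finset.sum_congr rfl fun c _ => by rw [e1, e1]
      _ = ∑ c, (∑ a, (J a ⬝ᵥ (T *ᵥ J c)) * (J a ⬝ᵥ (T *ᵥ Φ)))
            * (∑ b, (J b ⬝ᵥ (T *ᵥ J c)) * (J b ⬝ᵥ (T *ᵥ Ψ))) := by
          exact sum_rearrange (fun a c => J a ⬝ᵥ (T *ᵥ J c)) _ _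
      _ = ∑ c, (J c ⬝ᵥ (A *ᵥ Φ)) * (J c ⬝ᵥ (A *ᵥ Ψ)) := by
          refine Finset.sum_congr rfl fun c _ => ?_
          rw [key c Φ, key c Ψ]
      _ = (A *ᵥ Φ) ⬝ᵥ gm *ᵥ (A *ᵥ Ψ) := contract_metric gm _ _ J hgJ
      _ = Φ ⬝ᵥ ((Aᵀ * gm * A) *ᵥ Ψ) := by
          rw [dot_shift, Matrix.mulVec_mulVec, ← Matrix.mul_assoc]
  -- RHS computation
  have hR : (G p * gm * G p) = (s⁻¹ * s⁻¹) • (A * gm * A) := by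
    rw [hGdef p, ← hT, ← hgm, ← hs, hAM]
    simp only [smul_mul_assoc, mul_smul_comm, smul_smul]
  rw [hL, hR]
  have : ∑ μ, ∑ ν, ((s⁻¹ * s⁻¹) • (A * gm * A)) μ ν * Φ μ * Ψ ν
      = (s⁻¹ * s⁻¹) * (Φ ⬝ᵥ ((A * gm * A) *ᵥ Ψ)) := by
    rw [quad_form_eq, Matrix.smul_mulVec, dotProduct_smul, smul_eq_mul]
  rw [this, hAT]
  field_simp
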